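/- arXiv:2210.00800 — 2 statements merged into one kernel-verified Lean document; each statement's English description precedes it below -/
import Mathlib

section
/- Let 𝔊 be a topological group, H a countable group acting on 𝔊 by continuous automorphisms, and A ⊆ 𝔊 a countable subset. If 𝔊 is not topologically countably generated (i.e., there is no countable subgroup of 𝔊 that is dense in 𝔊), then there exists a subgroup 𝒢 ≤ 𝔊 such that: (1) h(𝒢) = 𝒢 for each h ∈ H; (2) A ⊆ 𝒢; (3) 𝒢 is closed and proper in 𝔊. -/
open Set

lemma countable_subgroup_closure {G : Type*} [Group G] {s : Set G} (hs : s.Countable) :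
    (Subgroup.closure s : Set G).Countable := by
  have ht : (s ∪ s⁻¹).Countable := hs.union (by simpa using hs.image Inv.inv)
  haveI := ht.to_subtype
  have hsub : (Subgroup.closure s : Set G) ⊆
      Set.range (fun l : List (s ∪ s⁻¹ : Set G) => (l.map Subtype.val).prod) := by
    intro x hx
    have hx' : x ∈ Submonoid.closure (s ∪ s⁻¹) := by
      rw [← Subgroup.closure_toSubmonoid]
      exact hx
    obtain ⟨l, hl, hprod⟩ := Submonoid.exists_list_of_mem_closure hx'
    refine ⟨l.attach.map (fun y => (⟨y.1, hl y.1 y.2⟩ : (s ∪ s⁻¹ : Set G))), ?_⟩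
    simp only [List.map_map]
    have : (l.attach.map ((Subtype.val ∘ fun y : {x // x ∈ l} =>
        (⟨y.1, hl y.1 y.2⟩ : (s ∪ s⁻¹ : Set G))))) = l := by
      simp [List.attach_map_subtype_val]
    rw [this, hprod]
  exact (Set.countable_range _).mono hsub

/-- If a topological group `𝔊` is not topologically countably generated, `H` is a countable
group acting on `𝔊` by continuous automorphisms, and `A ⊆ 𝔊` is countable, then there is
an `H`-invariant closed proper subgroup of `𝔊` containing `A`. -/
theorem stmt_1 (𝔊 : Type*) [Group 𝔊] [TopologicalSpace 𝔊] [IsTopologicalGroup 𝔊]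
    (H : Type*) [Group H] [Countable H] (φ : H →* (𝔊 ≃* 𝔊))
    (hφ : ∀ h : H, Continuous (φ h))
    (A : Set 𝔊) (hA : A.Countable)
    (hbig : ¬ ∃ S : Subgroup 𝔊, (S : Set 𝔊).Countable ∧ Dense (S : Set 𝔊)) :
    ∃ 𝒢 : Subgroup 𝔊,
      (∀ h : H, (φ h) '' (𝒢 : Set 𝔊) = (𝒢 : Set 𝔊)) ∧
      A ⊆ (𝒢 : Set 𝔊) ∧
      IsClosed (𝒢 : Set 𝔊) ∧ 𝒢 ≠ ⊤ := by
  classical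
  set B : Set 𝔊 := ⋃ h : H, (φ h) '' A with hB
  have hBc : B.Countable := Set.countable_iUnion fun h => hA.image _
  have hAB : A ⊆ B := by
    intro a ha
    exact Set.mem_iUnion.2 ⟨1, by simpa using ha⟩
  have hcomp : ∀ g h : H, (φ g) '' ((φ h) '' A) = (φ (g * h)) '' A := by
    intro g h
    rw [Set.image_image]
    apply Set.image_congr'
    intro x
    simp [map_mul]
  have hBinv : ∀ g : H, (φ g) '' B = B := by
    intro g
    rw [hB, Set.image_iUnion]
    simp_rw [hcomp]
    exact (Equiv.mulLeft g).surjective.iUnion_comp (fun h => (φ h) '' A)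
  set S : Subgroup 𝔊 := Subgroup.closure B with hS
  have hScount : (S : Set 𝔊).Countable := countable_subgroup_closure hBc
  have hSinv : ∀ g : H, (φ g) '' (S : Set 𝔊) = (S : Set 𝔊) := by
    intro g
    have : Subgroup.map (φ g).toMonoidHom S = S := by
      rw [hS, MonoidHom.map_closure]
      simp only [MulEquiv.coe_toMonoidHom]
      rw [hBinv]
    calc (φ g) '' (S : Set 𝔊) = (Subgroup.map (φ g).toMonoidHom S : Set 𝔊) := by
          rw [Subgroup.coe_map]; rfl
      _ = (S : Set 𝔊) := by rw [this]
  -- each φ g is a homeomorphism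
  have hsymm : ∀ g : H, Continuous (φ g).symm := by
    intro g
    have h1 := hφ g⁻¹
    have h2 : φ g⁻¹ = (φ g)⁻¹ := map_inv φ g
    rw [h2] at h1
    exact h1
  refine ⟨S.topologicalClosure, ?_, ?_, S.isClosed_topologicalClosure, ?_⟩
  · intro g
    have himg : (φ g) '' closure (S : Set 𝔊) = closure ((φ g) '' (S : Set 𝔊)) := by
      exact (Homeomorph.mk (φ g).toEquiv (hφ g) (hsymm g)).image_closure (S : Set 𝔊)
    rw [Subgroup.topologicalClosure_coe, himg, hSinv]
  · intro a ha
    rw [Subgroup.topologicalClosure_coe]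
    exact subset_closure (Subgroup.subset_closure (hAB ha))
  · intro htop
    refine hbig ⟨S, hScount, ?_⟩
    rw [dense_iff_closure_eq, ← Subgroup.topologicalClosure_coe, htop, Subgroup.coe_top]
end

section
/- If a group H acts on a finitely generated group G, then the profinite completion of the semidirect product G ⋊ H is topologically isomorphic to the semidirect product of the profinite completions: Ĝ ⋊ Ĥ ≅ (G ⋊ H)^. -/
/-- The finite-index normal subgroups of `G`. -/
def FIN (G : Type*) [Group G] : Type _ :=
  {N : Subgroup G // N.Normal ∧ N.FiniteIndex}

instance FIN.normal {G : Type*} [Group G] (N : FIN G) : N.1.Normal := N.2.1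

instance FIN.finiteIndex {G : Type*} [Group G] (N : FIN G) : N.1.FiniteIndex := N.2.2

/-- Finite quotients of `G` carry the discrete topology. -/
instance finQuotTop {G : Type*} [Group G] (N : FIN G) : TopologicalSpace (G ⧸ N.1) := ⊥

instance finQuotDiscrete {G : Type*} [Group G] (N : FIN G) :
    DiscreteTopology (G ⧸ N.1) := ⟨rfl⟩

/-- The transition map between finite quotients of `G`. -/
def finTrans {G : Type*} [Group G] (N M : FIN G) (h : N.1 ≤ M.1) :
    (G ⧸ N.1) →* (G ⧸ M.1) :=
  QuotientGroup.map N.1 M.1 (MonoidHom.id G) (by simpa using h)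

/-- The profinite completion of `G`, as the subgroup of compatible families in the
product of all finite quotients of `G`. -/
def profiniteCompletionSubgroup (G : Type*) [Group G] :
    Subgroup (∀ N : FIN G, G ⧸ N.1) where
  carrier := {x | ∀ (N M : FIN G) (h : N.1 ≤ M.1), finTrans N M h (x N) = x M}
  one_mem' := by intro N M h; simp [map_one]
  mul_mem' := by
    intro x y hx hy N M h
    have : (x * y) N = x N * y N := rfl
    rw [this, map_mul, hx N M h, hy N M h]
    rfl
  inv_mem' := by
    intro x hx N M h
    have : (x⁻¹) N = (x N)⁻¹ := rfl
    rw [this, map_inv, hx N M h]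
    rfl

/-- The profinite completion of a group `G`, as a topological group. -/
def ProfiniteCompletion (G : Type*) [Group G] : Type _ :=
  ↥(profiniteCompletionSubgroup G)

instance (G : Type*) [Group G] : Group (ProfiniteCompletion G) :=
  inferInstanceAs (Group ↥(profiniteCompletionSubgroup G))

instance finQuotTopGroup {G : Type*} [Group G] (N : FIN G) :
    IsTopologicalGroup (G ⧸ N.1) :=
  { continuous_mul := continuous_of_discreteTopology
    continuous_inv := continuous_of_discreteTopology }

instance (G : Type*) [Group G] : TopologicalSpace (ProfiniteCompletion G) :=
  inferInstanceAs (TopologicalSpace ↥(profiniteCompletionSubgroup G))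

instance (G : Type*) [Group G] : IsTopologicalGroup (ProfiniteCompletion G) :=
  inferInstanceAs (IsTopologicalGroup ↥(profiniteCompletionSubgroup G))

/-- The canonical map from `G` to its profinite completion. -/
def toProfiniteCompletion (G : Type*) [Group G] : G →* ProfiniteCompletion G where
  toFun g := ⟨fun N => QuotientGroup.mk g, by
    intro N M h
    simp [finTrans, finQuotTop]⟩
  map_one' := rfl
  map_mul' g₁ g₂ := rfl

/-! ### Infrastructure -/

section Infra

variable {A B C : Type*} [Group A] [Group B] [Group C]

instance FIN.quotFinite (N : FIN A) : Finite (A ⧸ N.1) :=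
  Nat.finite_of_card_ne_zero (by rw [← Subgroup.index_eq_card]; exact N.2.2.1)

lemma finTrans_mk (N M : FIN A) (h : N.1 ≤ M.1) (a : A) :
    finTrans N M h (QuotientGroup.mk a) = QuotientGroup.mk a := by
  simp [finTrans]

@[ext] lemma PC.ext {x y : ProfiniteCompletion A} (h : ∀ N, x.1 N = y.1 N) : x = y :=
  Subtype.ext (funext h)

lemma PC.compat (x : ProfiniteCompletion A) (N M : FIN A) (h : N.1 ≤ M.1) :
    finTrans N M h (x.1 N) = x.1 M := x.2 N M h

lemma PC.mul_coe (x y : ProfiniteCompletion A) (N : FIN A) :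
    (x * y).1 N = x.1 N * y.1 N := rfl

instance : T2Space (ProfiniteCompletion A) :=
  inferInstanceAs (T2Space ↥(profiniteCompletionSubgroup A))

lemma isClosed_pc : IsClosed ((profiniteCompletionSubgroup A) : Set (∀ N : FIN A, A ⧸ N.1)) := by
  have : ((profiniteCompletionSubgroup A) : Set (∀ N : FIN A, A ⧸ N.1)) =
      ⋂ (N : FIN A) (M : FIN A) (h : N.1 ≤ M.1), {x | finTrans N M h (x N) = x M} := by
    ext x
    simp only [Set.mem_iInter, Set.mem_setOf_eq]
    rfl
  rw [this]
  refine isClosed_iInter fun N => isClosed_iInter fun M => isClosed_iInter fun h => ?_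
  exact isClosed_eq (continuous_of_discreteTopology.comp (continuous_apply N))
    (continuous_apply M)

instance : CompactSpace (ProfiniteCompletion A) :=
  isCompact_iff_compactSpace.mp ((isClosed_pc (A := A)).isCompact)

lemma continuous_pc_coord (N : FIN A) :
    Continuous fun x : ProfiniteCompletion A => x.1 N :=
  (continuous_apply N).comp continuous_subtype_val

/-- Pullback of finite-index normal subgroups. -/
def FIN.comap (f : A →* B) (N : FIN B) : FIN A :=
  ⟨N.1.comap f, N.2.1.comap f, ⟨by
    rw [Subgroup.index_comap]
    intro h0
    exact N.2.2.1 (zero_dvd_iff.mp (h0 ▸ Subgroup.relIndex_dvd_index_of_normal N.1 f.range))⟩⟩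

lemma FIN.comap_coe (f : A →* B) (N : FIN B) : (FIN.comap f N).1 = N.1.comap f := rfl

lemma FIN.comap_le (f : A →* B) (N : FIN B) : (FIN.comap f N).1 ≤ Subgroup.comap f N.1 := le_rfl

/-- The quotient map induced by `f` on finite quotients. -/
def quotMap (f : A →* B) (N : FIN B) : (A ⧸ (FIN.comap f N).1) →* (B ⧸ N.1) :=
  QuotientGroup.map _ _ f le_rfl

lemma quotMap_mk (f : A →* B) (N : FIN B) (a : A) :
    quotMap f N (QuotientGroup.mk a) = QuotientGroup.mk (f a) := by
  rfl

lemma quotMap_injective (f : A →* B) (N : FIN B) : Function.Injective (quotMap f N) := by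
  intro a b h
  induction a using QuotientGroup.induction_on with
  | H a =>
  induction b using QuotientGroup.induction_on with
  | H b =>
  rw [quotMap_mk, quotMap_mk] at h
  rw [QuotientGroup.eq] at h ⊢
  exact Subgroup.mem_comap.mpr (by simpa using h)

/-- Functoriality of profinite completion. -/
def compMap (f : A →* B) : ProfiniteCompletion A →* ProfiniteCompletion B where
  toFun x := ⟨fun N => quotMap f N (x.1 (FIN.comap f N)), by
    intro N M h
    obtain ⟨a, ha⟩ := QuotientGroup.mk_surjective (x.1 (FIN.comap f N))
    have hc : finTrans (FIN.comap f N) (FIN.comap f M) (Subgroup.comap_mono h) (x.1 (FIN.comap f N))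
        = x.1 (FIN.comap f M) := x.2 _ _ _
    show finTrans N M h (quotMap f N (x.1 (FIN.comap f N)))
        = quotMap f M (x.1 (FIN.comap f M))
    rw [← ha] at hc ⊢
    exact congrArg (quotMap f M) hc⟩
  map_one' := by
    ext N
    show quotMap f N ((1 : ProfiniteCompletion A).1 (FIN.comap f N)) = 1
    have : (1 : ProfiniteCompletion A).1 (FIN.comap f N) = 1 := rfl
    rw [this, map_one]
  map_mul' x y := by
    ext N
    show quotMap f N ((x * y).1 (FIN.comap f N)) = _
    rw [PC.mul_coe, map_mul]
    rfl

lemma compMap_coe (f : A →* B) (x : ProfiniteCompletion A) (N : FIN B) :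
    (compMap f x).1 N = quotMap f N (x.1 (FIN.comap f N)) := rfl

lemma compMap_continuous (f : A →* B) : Continuous (compMap f) := by
  refine Continuous.subtype_mk (continuous_pi fun N => ?_) _
  exact continuous_of_discreteTopology.comp (continuous_pc_coord (FIN.comap f N))

lemma compMap_toPC (f : A →* B) (a : A) :
    compMap f (toProfiniteCompletion A a) = toProfiniteCompletion B (f a) := by
  ext N
  show quotMap f N (QuotientGroup.mk a) = QuotientGroup.mk (f a)
  rw [quotMap_mk]

lemma FIN.comap_comap (f : A →* B) (g : B →* C) (N : FIN C) :
    FIN.comap f (FIN.comap g N) = FIN.comap (g.comp f) N :=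
  Subtype.ext (Subgroup.comap_comap N.1 g f)

lemma compMap_comp (f : A →* B) (g : B →* C) (x : ProfiniteCompletion A) :
    compMap g (compMap f x) = compMap (g.comp f) x := by
  ext N
  rw [compMap_coe, compMap_coe, compMap_coe]
  obtain ⟨a, ha⟩ := QuotientGroup.mk_surjective (x.1 (FIN.comap (g.comp f) N))
  have h2 : x.1 (FIN.comap f (FIN.comap g N)) = QuotientGroup.mk a := by
    rw [FIN.comap_comap]; exact ha.symm
  rw [h2, ← ha, quotMap_mk, quotMap_mk, quotMap_mk]
  rfl

lemma compMap_id (x : ProfiniteCompletion A) : compMap (MonoidHom.id A) x = x := by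
  ext N
  rw [compMap_coe]
  obtain ⟨a, ha⟩ := QuotientGroup.mk_surjective (x.1 (FIN.comap (MonoidHom.id A) N))
  have he : FIN.comap (MonoidHom.id A) N = N := Subtype.ext (Subgroup.comap_id N.1)
  rw [← ha, quotMap_mk]
  rw [he] at ha
  exact ha

end Infra

/-! ### Finitely many normal subgroups of a given index -/

section FG

variable {G : Type*} [Group G]

lemma finite_monoidHom_of_fg (P : Type*) [Group P] [Finite P] [Group.FG G] :
    Finite (G →* P) := by
  obtain ⟨S, hS, hSfin⟩ := Group.fg_iff.mp ‹Group.FG G›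
  haveI : Finite S := hSfin
  refine Finite.of_injective (fun f => (fun s : S => f s.1)) ?_
  intro f g h
  refine MonoidHom.ext fun x => ?_
  have hx : x ∈ Subgroup.closure S := hS ▸ Subgroup.mem_top x
  induction hx using Subgroup.closure_induction with
  | mem y hy => exact congrFun h ⟨y, hy⟩
  | one => simp
  | mul y z _ _ hy hz => simp [map_mul, hy, hz]
  | inv y _ hy => simp [map_inv, hy]

noncomputable def equivOfNatCard {α : Type*} {n : ℕ} (h : Nat.card α = n) (h0 : n ≠ 0) :
    α ≃ Fin n :=
  haveI : Finite α := Nat.finite_of_card_ne_zero (by rwa [h])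
  haveI : Fintype α := Fintype.ofFinite α
  Fintype.equivFinOfCardEq (by rwa [← Nat.card_eq_fintype_card])

/-- The permutation representation of `G` on `G ⧸ N` transported to `Fin n`. -/
def permHomOf (N : Subgroup G) [N.Normal] {n : ℕ} (e : (G ⧸ N) ≃ Fin n) :
    G →* Equiv.Perm (Fin n) where
  toFun g := (e.symm.trans ((MulAction.toPermHom G (G ⧸ N)) g)).trans e
  map_one' := by ext i; simp
  map_mul' g1 g2 := by ext i; simp [mul_smul]

lemma permHomOf_ker (N : Subgroup G) [N.Normal] {n : ℕ} (e : (G ⧸ N) ≃ Fin n) :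
    (permHomOf N e).ker = N := by
  have h1 : (permHomOf N e).ker = (MulAction.toPermHom G (G ⧸ N)).ker := by
    ext g
    simp only [MonoidHom.mem_ker]
    constructor
    · intro hg
      ext q
      have h2 := congrFun (congrArg (fun (p : Equiv.Perm (Fin n)) => (p : Fin n → Fin n)) hg) (e q)
      simp only [permHomOf, MonoidHom.coe_mk, OneHom.coe_mk, Equiv.trans_apply,
        Equiv.symm_apply_apply] at h2
      have : e (((MulAction.toPermHom G (G ⧸ N)) g) q) = e q := h2
      simpa using e.injective this
    · intro hg
      ext i
      have h3 : g • (e.symm i) = e.symm i := by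
        have := congrArg (fun p : Equiv.Perm (G ⧸ N) => p (e.symm i)) hg
        simpa using this
      simp [permHomOf, h3]
  rw [h1, ← Subgroup.normalCore_eq_ker]
  exact le_antisymm N.normalCore_le (Subgroup.normal_le_normalCore.mpr le_rfl)

lemma finite_normal_subgroups [Group.FG G] {n : ℕ} (h0 : n ≠ 0) :
    {N : Subgroup G | N.Normal ∧ N.index = n}.Finite := by
  rw [← Set.finite_coe_iff]
  haveI : Finite (G →* Equiv.Perm (Fin n)) := finite_monoidHom_of_fg _
  refine Finite.of_injective (fun N => @permHomOf G _ N.1 N.2.1 n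
    (equivOfNatCard (by rw [← Subgroup.index_eq_card]; exact N.2.2) h0)) ?_
  intro N1 N2 h
  have hk := congrArg MonoidHom.ker h
  rw [@permHomOf_ker G _ N1.1 N1.2.1, @permHomOf_ker G _ N2.1 N2.2.1] at hk
  exact Subtype.ext hk

end FG

/-! ### The invariant core and cofinality -/

section Core

variable {G H : Type*} [Group G] [Group H] (φ : H →* MulAut G)

lemma exists_invariant_core [Group.FG G] (M : FIN G) :
    ∃ M' : FIN G, M'.1 ≤ M.1 ∧ ∀ h : H, M'.1.comap (φ h).toMonoidHom = M'.1 := by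
  set n := M.1.index with hn
  have h0 : n ≠ 0 := M.2.2.1
  set T : Set (Subgroup G) := Set.range (fun h : H => M.1.comap (φ h).toMonoidHom) with hT
  have hTsub : T ⊆ {N : Subgroup G | N.Normal ∧ N.index = n} := by
    rintro _ ⟨h, rfl⟩
    refine ⟨M.2.1.comap _, ?_⟩
    rw [Subgroup.index_comap, MonoidHom.range_eq_top.mpr (φ h).surjective,
      Subgroup.relIndex_top_right]
  have hTfin : T.Finite := (finite_normal_subgroups h0).subset hTsub
  haveI : Finite ↥T := hTfin
  have hmem : ∀ x : G, x ∈ (⨅ N : T, (N : Subgroup G)) ↔ ∀ h : H, φ h x ∈ M.1 := by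
    intro x
    rw [Subgroup.mem_iInf]
    constructor
    · intro hx h
      exact Subgroup.mem_comap.mp (hx ⟨_, ⟨h, rfl⟩⟩)
    · rintro hx ⟨_, ⟨h, rfl⟩⟩
      exact Subgroup.mem_comap.mpr (hx h)
  have hnormal : (⨅ N : T, (N : Subgroup G)).Normal := by
    constructor
    intro x hx g
    rw [hmem] at hx ⊢
    intro h
    have : φ h (g * x * g⁻¹) = (φ h g) * (φ h x) * (φ h g)⁻¹ := by
      simp [map_mul, map_inv]
    rw [this]
    exact M.2.1.conj_mem _ (hx h) _
  have hfi : (⨅ N : T, (N : Subgroup G)).FiniteIndex :=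
    Subgroup.finiteIndex_iInf fun N => ⟨by rw [(hTsub N.2).2]; exact h0⟩
  refine ⟨⟨⨅ N : T, (N : Subgroup G), hnormal, hfi⟩, ?_, ?_⟩
  · intro x hx
    have := (hmem x).mp hx 1
    simpa using this
  · intro h
    ext x
    rw [Subgroup.mem_comap]
    show φ h x ∈ (⨅ N : T, (N : Subgroup G)) ↔ x ∈ (⨅ N : T, (N : Subgroup G))
    rw [hmem, hmem]
    constructor
    · intro hx h''
      have := hx (h'' * h⁻¹)
      rwa [show φ (h'' * h⁻¹) (φ h x) = φ h'' x by
        rw [← MulAut.mul_apply, ← map_mul]; simp] at this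
    · intro hx h'
      rw [← MulAut.mul_apply, ← map_mul]
      exact hx _

open SemidirectProduct in
lemma exists_cofinal_ker [Group.FG G] (M : FIN G) :
    ∃ N : FIN (G ⋊[φ] H), (FIN.comap (inl : G →* G ⋊[φ] H) N).1 ≤ M.1 := by
  classical
  obtain ⟨M', hle, hinv⟩ := exists_invariant_core φ M
  have hmap : ∀ h : H, Subgroup.map ((φ h : G ≃* G) : G →* G) M'.1 = M'.1 := by
    intro h
    rw [Subgroup.map_equiv_eq_comap_symm]
    have : (φ h).symm = φ h⁻¹ := by
      rw [← MulAut.inv_def, ← map_inv]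
    rw [this]
    exact hinv h⁻¹
  haveI : Finite (G ⧸ M'.1) := FIN.quotFinite M'
  haveI : Finite (MulAut (G ⧸ M'.1)) :=
    Finite.of_injective (fun e => (e : (G ⧸ M'.1) → (G ⧸ M'.1)))
      (fun a b hab => by ext q; exact congrFun hab q)
  let ρ : H →* MulAut (G ⧸ M'.1) := {
    toFun := fun h => QuotientGroup.congr M'.1 M'.1 (φ h) (hmap h)
    map_one' := by
      ext q
      induction q using QuotientGroup.induction_on with
      | H a => simp
    map_mul' := fun h1 h2 => by
      ext q
      induction q using QuotientGroup.induction_on with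
      | H a => simp [MulAut.mul_apply] }
  let ι : MulAut (G ⧸ M'.1) →* MulAut (G ⧸ M'.1) := MonoidHom.id _
  let Θ : (G ⋊[φ] H) →* ((G ⧸ M'.1) ⋊[ι] MulAut (G ⧸ M'.1)) := {
    toFun := fun k => ⟨QuotientGroup.mk k.left, ρ k.right⟩
    map_one' := by
      congr 1 <;> simp
    map_mul' := fun a b => by
      have h1 : (a * b).left = a.left * φ a.right b.left := rfl
      have h2 : (a * b).right = a.right * b.right := rfl
      refine SemidirectProduct.ext ?_ ?_
      · show QuotientGroup.mk ((a * b).left) = _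
        rw [h1]
        show _ = QuotientGroup.mk a.left * ι (ρ a.right) (QuotientGroup.mk b.left)
        show _ = QuotientGroup.mk a.left * ρ a.right (QuotientGroup.mk b.left)
        have : ρ a.right (QuotientGroup.mk b.left) = QuotientGroup.mk (φ a.right b.left) := rfl
        rw [this]
        rfl
      · show ρ ((a * b).right) = ρ a.right * ρ b.right
        rw [h2, map_mul] }
  haveI : Finite ((G ⧸ M'.1) ⋊[ι] MulAut (G ⧸ M'.1)) :=
    Finite.of_injective (fun k => (k.left, k.right))
      (fun a b hab => SemidirectProduct.ext (congrArg Prod.fst hab) (congrArg Prod.snd hab))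
  have hfi : Θ.ker.FiniteIndex := by
    constructor
    rw [Subgroup.index_ker]
    have : Nat.card ↥Θ.range ≠ 0 := Nat.card_pos.ne'
    exact this
  refine ⟨⟨Θ.ker, inferInstance, hfi⟩, ?_⟩
  intro x hx
  have hx' : Θ (inl x) = 1 := hx
  have hleft : (QuotientGroup.mk x : G ⧸ M'.1) = 1 := by
    have := congrArg SemidirectProduct.left hx'
    simpa [Θ] using this
  exact hle ((QuotientGroup.eq_one_iff x).mp hleft)

/-! ### The kernel of the completed projection -/

open SemidirectProduct in
lemma star_lemma (k : ProfiniteCompletion (G ⋊[φ] H))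
    (hk : compMap (rightHom : G ⋊[φ] H →* H) k = 1) (N : FIN (G ⋊[φ] H)) :
    ∃ g : G, k.1 N = QuotientGroup.mk (inl g) := by
  have hLnormal : (N.1.map (rightHom : G ⋊[φ] H →* H)).Normal :=
    Subgroup.Normal.map N.2.1 _ rightHom_surjective
  have hLfi : (N.1.map (rightHom : G ⋊[φ] H →* H)).FiniteIndex := by
    constructor
    intro h0
    have hcm : N.1 ≤ Subgroup.comap rightHom (N.1.map (rightHom : G ⋊[φ] H →* H)) :=
      Subgroup.le_comap_map _ _
    have h1 : (Subgroup.comap (rightHom : G ⋊[φ] H →* H) (N.1.map rightHom)).index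
        = (N.1.map (rightHom : G ⋊[φ] H →* H)).index := by
      rw [Subgroup.index_comap, MonoidHom.range_eq_top.mpr rightHom_surjective,
        Subgroup.relIndex_top_right]
    have h2 : (N.1.map (rightHom : G ⋊[φ] H →* H)).index ∣ N.1.index :=
      h1 ▸ Subgroup.index_dvd_of_le hcm
    rw [h0] at h2
    exact N.2.2.1 (zero_dvd_iff.mp h2)
  let L : FIN H := ⟨N.1.map rightHom, hLnormal, hLfi⟩
  let P : FIN (G ⋊[φ] H) := FIN.comap rightHom L
  have hNP : N.1 ≤ P.1 := Subgroup.le_comap_map _ _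
  have hP1 : k.1 P = 1 := by
    have h3 : quotMap (rightHom : G ⋊[φ] H →* H) L (k.1 P) = 1 := by
      have := congrArg (fun y : ProfiniteCompletion H => y.1 L) hk
      exact this
    have h4 : quotMap (rightHom : G ⋊[φ] H →* H) L (1 : _ ⧸ P.1) = 1 := map_one _
    exact quotMap_injective (rightHom : G ⋊[φ] H →* H) L (h3.trans h4.symm)
  obtain ⟨w, hw⟩ := QuotientGroup.mk_surjective (k.1 N)
  have hwP : (QuotientGroup.mk w : _ ⧸ P.1) = 1 := by
    have hcpt := k.2 N P hNP
    rw [← hw, finTrans_mk] at hcpt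
    exact hcpt.trans hP1
  have hwmem : w ∈ P.1 := (QuotientGroup.eq_one_iff w).mp hwP
  obtain ⟨n, hn, hn2⟩ := Subgroup.mem_map.mp (Subgroup.mem_comap.mp hwmem)
  refine ⟨(w * n⁻¹).left, ?_⟩
  have hright : (w * n⁻¹).right = 1 := by
    show rightHom (w * n⁻¹) = 1
    rw [map_mul, map_inv, hn2]
    simp
  have hinl : inl ((w * n⁻¹).left) = w * n⁻¹ := by
    conv_rhs => rw [← inl_left_mul_inr_right (w * n⁻¹)]
    rw [hright]
    simp
  rw [hinl, ← hw, QuotientGroup.eq]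
  simpa using N.1.inv_mem hn

open SemidirectProduct in
lemma inl_injective_compMap [Group.FG G] :
    Function.Injective (compMap (inl : G →* G ⋊[φ] H)) := by
  intro x y hxy
  ext M
  obtain ⟨N, hN⟩ := exists_cofinal_ker φ M
  have h1 : (compMap (inl : G →* G ⋊[φ] H) x).1 N = (compMap (inl : G →* G ⋊[φ] H) y).1 N := by
    rw [hxy]
  rw [compMap_coe, compMap_coe] at h1
  have h2 := quotMap_injective (inl : G →* G ⋊[φ] H) N h1
  rw [← x.2 (FIN.comap inl N) M hN, ← y.2 (FIN.comap inl N) M hN, h2]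

open SemidirectProduct in
lemma exists_preimage [Group.FG G] (k : ProfiniteCompletion (G ⋊[φ] H))
    (hk : compMap (rightHom : G ⋊[φ] H →* H) k = 1) :
    ∃ x : ProfiniteCompletion G, compMap (inl : G →* G ⋊[φ] H) x = k := by
  classical
  let NM : FIN G → FIN (G ⋊[φ] H) := fun M => (exists_cofinal_ker φ M).choose
  have hNM : ∀ M, (FIN.comap (inl : G →* G ⋊[φ] H) (NM M)).1 ≤ M.1 :=
    fun M => (exists_cofinal_ker φ M).choose_spec
  let gM : FIN G → G := fun M => (star_lemma φ k hk (NM M)).choose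
  have hgM : ∀ M, k.1 (NM M) = QuotientGroup.mk (inl (gM M)) :=
    fun M => (star_lemma φ k hk (NM M)).choose_spec
  have key : ∀ (M : FIN G) (g : G) (N' : FIN (G ⋊[φ] H)), N'.1 ≤ (NM M).1 →
      k.1 N' = QuotientGroup.mk (inl g) →
      (QuotientGroup.mk (gM M) : G ⧸ M.1) = QuotientGroup.mk g := by
    intro M g N' hle hg
    have h1 : (QuotientGroup.mk (inl (gM M)) : _ ⧸ (NM M).1) = QuotientGroup.mk (inl g) := by
      rw [← hgM M, ← k.2 N' (NM M) hle, hg, finTrans_mk]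
    have h2 : quotMap (inl : G →* G ⋊[φ] H) (NM M) (QuotientGroup.mk (gM M))
        = quotMap (inl : G →* G ⋊[φ] H) (NM M) (QuotientGroup.mk g) := by
      rw [quotMap_mk, quotMap_mk]; exact h1
    have h3 := quotMap_injective (inl : G →* G ⋊[φ] H) (NM M) h2
    have h4 := congrArg (finTrans (FIN.comap (inl : G →* G ⋊[φ] H) (NM M)) M (hNM M)) h3
    rwa [finTrans_mk, finTrans_mk] at h4
  refine ⟨⟨fun M => QuotientGroup.mk (gM M), ?_⟩, ?_⟩
  · intro M1 M2 h12
    let N' : FIN (G ⋊[φ] H) := ⟨(NM M1).1 ⊓ (NM M2).1, inferInstance, inferInstance⟩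
    obtain ⟨g, hg⟩ := star_lemma φ k hk N'
    show finTrans M1 M2 h12 (QuotientGroup.mk (gM M1)) = QuotientGroup.mk (gM M2)
    rw [finTrans_mk]
    have e1 : (QuotientGroup.mk (gM M1) : G ⧸ M1.1) = QuotientGroup.mk g :=
      key M1 g N' inf_le_left hg
    have e2 : (QuotientGroup.mk (gM M2) : G ⧸ M2.1) = QuotientGroup.mk g :=
      key M2 g N' inf_le_right hg
    have e1' := congrArg (finTrans M1 M2 h12) e1
    rw [finTrans_mk, finTrans_mk] at e1'
    rw [e1', e2]
  · ext N
    show quotMap (inl : G →* G ⋊[φ] H) N _ = k.1 N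
    set M := FIN.comap (inl : G →* G ⋊[φ] H) N with hM
    let N' : FIN (G ⋊[φ] H) := ⟨N.1 ⊓ (NM M).1, inferInstance, inferInstance⟩
    obtain ⟨g, hg⟩ := star_lemma φ k hk N'
    have e1 : (QuotientGroup.mk (gM M) : G ⧸ M.1) = QuotientGroup.mk g :=
      key M g N' inf_le_right hg
    have e2 := congrArg (quotMap (inl : G →* G ⋊[φ] H) N) e1
    rw [quotMap_mk, quotMap_mk] at e2
    show quotMap (inl : G →* G ⋊[φ] H) N (QuotientGroup.mk (gM M)) = k.1 N
    rw [quotMap_mk, e2, ← k.2 N' N inf_le_left, hg, finTrans_mk]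

end Core

lemma compMap_one' {A B : Type*} [Group A] [Group B] (x : ProfiniteCompletion A) :
    compMap (1 : A →* B) x = 1 := by
  ext N
  rw [compMap_coe]
  obtain ⟨a, ha⟩ := QuotientGroup.mk_surjective (x.1 (FIN.comap (1 : A →* B) N))
  rw [← ha, quotMap_mk]
  simp
  rfl

set_option maxHeartbeats 1000000 in
/-- If a group `H` acts on a finitely generated group `G` via `φ : H →* MulAut G`, then
the action extends to a continuous action `ψ` of `Ĥ` on `Ĝ` and the profinite completion
of `G ⋊[φ] H` is topologically isomorphic to `Ĝ ⋊[ψ] Ĥ`, compatibly with the canonical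
maps into the completions. -/
theorem stmt_17 (G H : Type*) [Group G] [Group H] [Group.FG G] (φ : H →* MulAut G) :
    ∃ ψ : ProfiniteCompletion H →* MulAut (ProfiniteCompletion G),
      (∀ h : ProfiniteCompletion H, Continuous (ψ h)) ∧
      Continuous (fun q : ProfiniteCompletion H × ProfiniteCompletion G => ψ q.1 q.2) ∧
      (∀ (h : H) (g : G),
        ψ (toProfiniteCompletion H h) (toProfiniteCompletion G g)
          = toProfiniteCompletion G (φ h g)) ∧
      ∃ e : (ProfiniteCompletion G ⋊[ψ] ProfiniteCompletion H)
              ≃* ProfiniteCompletion (G ⋊[φ] H),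
        Continuous (fun q : ProfiniteCompletion G × ProfiniteCompletion H =>
          e ⟨q.1, q.2⟩) ∧
        Continuous (fun x : ProfiniteCompletion (G ⋊[φ] H) =>
          ((e.symm x).left, (e.symm x).right)) ∧
        ∀ (g : G) (h : H),
          e ⟨toProfiniteCompletion G g, toProfiniteCompletion H h⟩
            = toProfiniteCompletion (G ⋊[φ] H) ⟨g, h⟩ := by
  classical
  let ihat : ProfiniteCompletion G →* ProfiniteCompletion (G ⋊[φ] H) :=
    compMap SemidirectProduct.inl
  let jhat : ProfiniteCompletion H →* ProfiniteCompletion (G ⋊[φ] H) :=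
    compMap SemidirectProduct.inr
  let phat : ProfiniteCompletion (G ⋊[φ] H) →* ProfiniteCompletion H :=
    compMap SemidirectProduct.rightHom
  have hpj : ∀ y, phat (jhat y) = y := fun y => by
    show compMap _ (compMap _ y) = y
    rw [compMap_comp, SemidirectProduct.rightHom_comp_inr, compMap_id]
  have hpi : ∀ x, phat (ihat x) = 1 := fun x => by
    show compMap _ (compMap _ x) = 1
    rw [compMap_comp]
    have h1 : (SemidirectProduct.rightHom : G ⋊[φ] H →* H).comp SemidirectProduct.inl = 1 := by
      ext g; simp
    rw [h1, compMap_one']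
  have hinj : Function.Injective ihat := inl_injective_compMap φ
  have hconti : Continuous ihat := compMap_continuous _
  have hcontj : Continuous jhat := compMap_continuous _
  let ieq := Equiv.ofInjective ihat hinj
  let iho : ProfiniteCompletion G ≃ₜ Set.range ihat :=
    Continuous.homeoOfEquivCompactToT2 (f := ieq) (Continuous.subtype_mk hconti _)
  have hmem : ∀ (η : ProfiniteCompletion H) (x : ProfiniteCompletion G),
      jhat η * ihat x * (jhat η)⁻¹ ∈ Set.range ihat := by
    intro η x
    apply exists_preimage φ
    show phat _ = 1
    rw [map_mul, map_mul, map_inv, hpj, hpi]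
    simp
  let ψ0 : ProfiniteCompletion H → ProfiniteCompletion G → ProfiniteCompletion G :=
    fun η x => ieq.symm ⟨jhat η * ihat x * (jhat η)⁻¹, hmem η x⟩
  have hpsi : ∀ η x, ihat (ψ0 η x) = jhat η * ihat x * (jhat η)⁻¹ :=
    fun η x => Equiv.apply_ofInjective_symm hinj _
  let ψau : ProfiniteCompletion H → MulAut (ProfiniteCompletion G) := fun η =>
    { toFun := ψ0 η
      invFun := ψ0 η⁻¹
      left_inv := fun x => hinj (by rw [hpsi, hpsi, map_inv]; group)
      right_inv := fun x => hinj (by rw [hpsi, hpsi, map_inv]; group)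
      map_mul' := fun x y => hinj (by rw [map_mul, hpsi, map_mul, hpsi, hpsi]; group) }
  let ψmon : ProfiniteCompletion H →* MulAut (ProfiniteCompletion G) :=
    { toFun := ψau
      map_one' := MulEquiv.ext fun x => hinj (by
        show ihat (ψ0 1 x) = ihat ((1 : MulAut (ProfiniteCompletion G)) x)
        rw [hpsi, map_one]
        simp)
      map_mul' := fun a b => MulEquiv.ext fun x => hinj (by
        show ihat (ψ0 (a * b) x) = ihat (ψ0 a (ψ0 b x))
        rw [hpsi, hpsi, hpsi, map_mul]
        group) }
  have hcontpair : Continuous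
      fun q : ProfiniteCompletion H × ProfiniteCompletion G => ψ0 q.1 q.2 := by
    have h1 : Continuous fun q : ProfiniteCompletion H × ProfiniteCompletion G =>
        jhat q.1 * ihat q.2 * (jhat q.1)⁻¹ := by
      have cj : Continuous fun q : ProfiniteCompletion H × ProfiniteCompletion G => jhat q.1 :=
        hcontj.comp continuous_fst
      have ci : Continuous fun q : ProfiniteCompletion H × ProfiniteCompletion G => ihat q.2 :=
        hconti.comp continuous_snd
      exact (cj.mul ci).mul cj.inv
    have h2 : (fun q : ProfiniteCompletion H × ProfiniteCompletion G => ψ0 q.1 q.2)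
        = fun q => iho.symm ⟨jhat q.1 * ihat q.2 * (jhat q.1)⁻¹, hmem q.1 q.2⟩ := rfl
    rw [h2]
    exact iho.symm.continuous.comp (Continuous.subtype_mk h1 _)
  have hcompat : ∀ (h : H) (g : G),
      ψau (toProfiniteCompletion H h) (toProfiniteCompletion G g)
        = toProfiniteCompletion G (φ h g) := by
    intro h g
    apply hinj
    show ihat (ψ0 (toProfiniteCompletion H h) (toProfiniteCompletion G g))
        = ihat (toProfiniteCompletion G (φ h g))
    rw [hpsi]
    show jhat (toProfiniteCompletion H h) * ihat (toProfiniteCompletion G g) *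
        (jhat (toProfiniteCompletion H h))⁻¹ = ihat (toProfiniteCompletion G (φ h g))
    rw [show jhat (toProfiniteCompletion H h)
          = toProfiniteCompletion (G ⋊[φ] H) (SemidirectProduct.inr h) from compMap_toPC _ _,
        show ihat (toProfiniteCompletion G g)
          = toProfiniteCompletion (G ⋊[φ] H) (SemidirectProduct.inl g) from compMap_toPC _ _,
        show ihat (toProfiniteCompletion G (φ h g))
          = toProfiniteCompletion (G ⋊[φ] H) (SemidirectProduct.inl (φ h g)) from compMap_toPC _ _,
        SemidirectProduct.inl_aut]
    simp [map_mul, map_inv]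
  have cond : ∀ η : ProfiniteCompletion H,
      ihat.comp (ψmon η).toMonoidHom = (MulAut.conj (jhat η)).toMonoidHom.comp ihat := by
    intro η
    refine MonoidHom.ext fun x => ?_
    show ihat (ψ0 η x) = MulAut.conj (jhat η) (ihat x)
    rw [hpsi, MulAut.conj_apply]
  let ehom := SemidirectProduct.lift ihat jhat cond
  have eapp : ∀ (x : ProfiniteCompletion G) (η : ProfiniteCompletion H),
      ehom ⟨x, η⟩ = ihat x * jhat η := by
    intro x η
    have h1 : (⟨x, η⟩ : ProfiniteCompletion G ⋊[ψmon] ProfiniteCompletion H)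
        = SemidirectProduct.inl x * SemidirectProduct.inr η :=
      (SemidirectProduct.inl_left_mul_inr_right ⟨x, η⟩).symm
    rw [h1, map_mul, SemidirectProduct.lift_inl, SemidirectProduct.lift_inr]
  have hbij : Function.Bijective ehom := by
    constructor
    · rw [injective_iff_map_eq_one]
      intro a ha
      have ha' : ihat a.left * jhat a.right = 1 := by
        rw [← eapp a.left a.right]
        exact ha
      have h5 : a.right = 1 := by
        have h6 := congrArg phat ha'
        rwa [map_mul, hpi, hpj, one_mul, map_one] at h6
      have h7 : ihat a.left = 1 := by
        rw [h5] at ha'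
        simpa using ha'
      have h8 : a.left = 1 := hinj (by rw [h7, map_one])
      exact SemidirectProduct.ext h8 h5
    · intro kk
      obtain ⟨x, hx⟩ := exists_preimage φ (kk * (jhat (phat kk))⁻¹) (by
        show phat _ = 1
        rw [map_mul, map_inv, hpj]
        simp)
      refine ⟨⟨x, phat kk⟩, ?_⟩
      rw [eapp]
      show ihat x * jhat (phat kk) = kk
      rw [hx]
      group
  let e := MulEquiv.ofBijective ehom hbij
  have hcontF : Continuous fun q : ProfiniteCompletion G × ProfiniteCompletion H =>
      ihat q.1 * jhat q.2 :=
    (hconti.comp continuous_fst).mul (hcontj.comp continuous_snd)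
  have heF : (fun q : ProfiniteCompletion G × ProfiniteCompletion H => e ⟨q.1, q.2⟩)
      = fun q => ihat q.1 * jhat q.2 := funext fun q => eapp q.1 q.2
  let Fequiv : (ProfiniteCompletion G × ProfiniteCompletion H) ≃ ProfiniteCompletion (G ⋊[φ] H) :=
    { toFun := fun q => ihat q.1 * jhat q.2
      invFun := fun kk => ((e.symm kk).left, (e.symm kk).right)
      left_inv := fun q => by
        have h8 : e ⟨q.1, q.2⟩ = ihat q.1 * jhat q.2 := eapp q.1 q.2
        show ((e.symm (ihat q.1 * jhat q.2)).left, (e.symm (ihat q.1 * jhat q.2)).right) = q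
        rw [← h8, MulEquiv.symm_apply_apply]
      right_inv := fun kk => by
        have h9 : e ⟨(e.symm kk).left, (e.symm kk).right⟩ = kk := by
          have h10 : (⟨(e.symm kk).left, (e.symm kk).right⟩ :
              ProfiniteCompletion G ⋊[ψmon] ProfiniteCompletion H) = e.symm kk := rfl
          rw [h10, MulEquiv.apply_symm_apply]
        calc ihat (e.symm kk).left * jhat (e.symm kk).right
            = e ⟨(e.symm kk).left, (e.symm kk).right⟩ := (eapp _ _).symm
          _ = kk := h9 }
  let Fho : (ProfiniteCompletion G × ProfiniteCompletion H) ≃ₜ ProfiniteCompletion (G ⋊[φ] H) :=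
    Continuous.homeoOfEquivCompactToT2 (f := Fequiv) hcontF
  refine ⟨ψmon, ?_, hcontpair, hcompat, e, ?_, ?_, ?_⟩
  · intro h
    exact hcontpair.comp (Continuous.prodMk_right h)
  · rw [heF]
    exact hcontF
  · exact Fho.symm.continuous
  · intro g h
    rw [show e ⟨toProfiniteCompletion G g, toProfiniteCompletion H h⟩
        = ihat (toProfiniteCompletion G g) * jhat (toProfiniteCompletion H h) from eapp _ _,
      show ihat (toProfiniteCompletion G g)
        = toProfiniteCompletion (G ⋊[φ] H) (SemidirectProduct.inl g) from compMap_toPC _ _,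
      show jhat (toProfiniteCompletion H h)
        = toProfiniteCompletion (G ⋊[φ] H) (SemidirectProduct.inr h) from compMap_toPC _ _,
      ← map_mul]
    congr 1
    exact SemidirectProduct.inl_left_mul_inr_right ⟨g, h⟩
end
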